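/- arXiv:2403.04456 — 10 statements merged into one kernel-verified Lean document; each statement's English description precedes it below -/
import Mathlib

section
/- If a tree-shift X is of finite type with forbidden set contained in blocks of height p, then for every m > 0, taking n = max{p, m}, every [n]-pseudo-orbit in X is [m]-traced by some tree in X; in particular every tree-shift of finite type has the pseudo-orbit-tracing property. -/
open Set

/-- A labeled tree on alphabet `S` over alphabet `A`. -/
abbrev LTree (S A : Type*) := List S → A

/-- The metric on labeled trees: `2^{-n-1}` where `n` is the minimal length of a
word on which the trees differ, and `0` if they are equal. -/
noncomputable def treeDist {S A : Type*} (s t : LTree S A) : ℝ :=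
  haveI := Classical.propDecidable (s = t)
  if s = t then 0
  else (2 : ℝ) ^ (-((sInf {n : ℕ | ∃ w : List S, w.length = n ∧ s w ≠ t w} : ℕ) : ℤ) - 1)

/-- The shift map `σ^i`. -/
def shift {S A : Type*} (i : S) (t : LTree S A) : LTree S A := fun w => t (i :: w)

/-- A pattern: a labeling of a finite prefix-closed set of words. -/
structure TreePattern (S A : Type*) where
  dom : Set (List S)
  finite : dom.Finite
  prefixClosed : ∀ w ∈ dom, ∀ u : List S, u <+: w → u ∈ dom
  label : List S → A

/-- A tree `t` omits a pattern `p` if `p` is not a sub-pattern of `t`. -/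
def Omits {S A : Type*} (t : LTree S A) (p : TreePattern S A) : Prop :=
  ¬ ∃ w : List S, ∀ u ∈ p.dom, t (w ++ u) = p.label u

/-- `T_F`: the set of trees omitting all patterns in `F`. -/
def treesOmitting {S A : Type*} (F : Set (TreePattern S A)) : Set (LTree S A) :=
  {t | ∀ p ∈ F, Omits t p}

/-- A tree-shift: a closed, shift-invariant set of labeled trees. -/
def IsTreeShift {S A : Type*} [TopologicalSpace A] (X : Set (LTree S A)) : Prop :=
  IsClosed X ∧ ∀ i : S, shift i '' X ⊆ X

/-- A tree-shift of finite type: one defined by a finite set of forbidden patterns. -/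
def IsFiniteType {S A : Type*} (X : Set (LTree S A)) : Prop :=
  ∃ F : Set (TreePattern S A), F.Finite ∧ X = treesOmitting F

/-- `blockIn X n b`: the block of height `n` with labels `b` appears in some tree of `X`. -/
def blockIn {S A : Type*} (X : Set (LTree S A)) (n : ℕ) (b : List S → A) : Prop :=
  ∃ t ∈ X, ∃ w : List S, ∀ u : List S, u.length < n → t (w ++ u) = b u

/-- An `[n]`-pseudo-orbit in `X`, indexed by all words. -/
def IsPseudoOrbit {S A : Type*} (X : Set (LTree S A)) (n : ℕ)
    (T : List S → LTree S A) : Prop :=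
  (∀ w : List S, T w ∈ X) ∧
    ∀ (w : List S) (i : S) (u : List S), u.length < n → T w (i :: u) = T (w ++ [i]) u

/-- `t` `[m]`-traces the family `T`. -/
def Traces {S A : Type*} (m : ℕ) (T : List S → LTree S A) (t : LTree S A) : Prop :=
  ∀ w u : List S, u.length < m → t (w ++ u) = T w u

/-- The pseudo-orbit-tracing property. -/
def POTP {S A : Type*} (X : Set (LTree S A)) : Prop :=
  ∀ m : ℕ, 0 < m → ∃ n : ℕ, 0 < n ∧
    ∀ T : List S → LTree S A, IsPseudoOrbit X n T → ∃ t ∈ X, Traces m T t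

/-- A finite `[n]`-pseudo-orbit of order `N`, indexed by words of length `< N`. -/
def IsFinitePseudoOrbit {S A : Type*} (X : Set (LTree S A)) (n N : ℕ)
    (T : List S → LTree S A) : Prop :=
  (∀ w : List S, w.length < N → T w ∈ X) ∧
    ∀ (w : List S), w.length + 1 < N → ∀ (i : S) (u : List S), u.length < n →
      T w (i :: u) = T (w ++ [i]) u

/-- `t` `[m]`-traces a finite family of order `N`. -/
def FinTraces {S A : Type*} (m N : ℕ) (T : List S → LTree S A) (t : LTree S A) : Prop :=
  ∀ w : List S, w.length < N → ∀ u : List S, u.length < m → t (w ++ u) = T w u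

/-- The finite pseudo-orbit-tracing property. -/
def FinPOTP {S A : Type*} (X : Set (LTree S A)) : Prop :=
  ∀ m : ℕ, 0 < m → ∃ n : ℕ, 0 < n ∧ ∀ N : ℕ, 0 < N →
    ∀ T : List S → LTree S A, IsFinitePseudoOrbit X n N T → ∃ t ∈ X, FinTraces m N T t

/-- Topological stability of a tree-shift, with respect to the metric `treeDist`. -/
def TopStable {S A : Type*} [TopologicalSpace A] (X : Set (LTree S A)) : Prop :=
  ∀ ε : ℝ, 0 < ε → ∃ δ : ℝ, 0 < δ ∧
    ∀ τ : S → X → X, (∀ i : S, Continuous (τ i)) →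
      (∀ (i : S) (t : X), treeDist (τ i t).1 (shift i t.1) < δ) →
      ∃ φ : X → X, Continuous φ ∧ (∀ t : X, treeDist (φ t).1 t.1 < ε) ∧
        ∀ (i : S) (t : X), shift i (φ t).1 = (φ (τ i t)).1

theorem stmt_7 {S A : Type*} [Fintype S] [Nonempty S] [Fintype A] [Nonempty A] [TopologicalSpace A] [DiscreteTopology A] (X : Set (LTree S A)) (p : ℕ) (hp : 0 < p)
    (F : Set (TreePattern S A)) (hF : F.Finite)
    (hdom : ∀ q ∈ F, q.dom = {w : List S | w.length < p})
    (hXF : X = treesOmitting F) :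
    (∀ m : ℕ, 0 < m →
      ∀ T : List S → LTree S A, IsPseudoOrbit X (max p m) T → ∃ t ∈ X, Traces m T t) ∧
    POTP X := by
  have main : ∀ m : ℕ, 0 < m →
      ∀ T : List S → LTree S A, IsPseudoOrbit X (max p m) T → ∃ t ∈ X, Traces m T t := by
    intro m hm T hT
    obtain ⟨hTX, hTs⟩ := hT
    have key : ∀ u w : List S, u.length ≤ max p m → T w u = T (w ++ u) [] := by
      intro u
      induction u with
      | nil => intro w _; simp
      | cons i u ih =>
        intro w hlen
        simp only [List.length_cons] at hlen
        rw [hTs w i u (by omega), ih (w ++ [i]) (by omega)]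
        simp
    refine ⟨fun v => T v [], ?_, ?_⟩
    · rw [hXF]
      intro q hq ⟨w, hw⟩
      have hTw : T w ∈ treesOmitting F := hXF ▸ hTX w
      refine hTw q hq ⟨[], fun u hu => ?_⟩
      have hu' : u.length < p := by rw [hdom q hq] at hu; exact hu
      have := hw u hu
      simp only [List.nil_append]
      rw [key u w (le_trans (le_of_lt hu') (le_max_left p m))]
      exact this
    · intro w u hu
      exact (key u w (le_trans (le_of_lt hu) (le_max_right p m))).symm
  refine ⟨main, fun m hm => ⟨max p m, ?_, main m hm⟩⟩
  omega
end

section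
/- If a tree-shift X has the pseudo-orbit-tracing property, then X is of finite type. -/
open Set

/-- The subtree of `t` at word `v` belongs to a shift-invariant set containing `t`. -/
lemma subtree_mem {S A : Type*} [TopologicalSpace A] {X : Set (LTree S A)}
    (hX : IsTreeShift X) : ∀ (v : List S) (t : LTree S A), t ∈ X →
      (fun u => t (v ++ u)) ∈ X := by
  intro v
  induction v with
  | nil => intro t ht; simpa using ht
  | cons i v ih =>
    intro t ht
    have h1 : shift i t ∈ X := hX.2 i ⟨t, ht, rfl⟩
    have := ih (shift i t) h1
    simpa [shift] using this

/-- Normalization of a labeling outside words of length `≤ n`. -/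
noncomputable def nrm {S A : Type*} [Nonempty A] (n : ℕ) (b : List S → A) : List S → A :=
  fun u => if u.length ≤ n then b u else Classical.arbitrary A

lemma nrm_eq {S A : Type*} [Nonempty A] (n : ℕ) (b : List S → A) {u : List S}
    (hu : u.length ≤ n) : nrm n b u = b u := by simp [nrm, hu]

lemma finite_nrm_fixed {S A : Type*} [Fintype S] [Fintype A] [Nonempty A] (n : ℕ) :
    {b : List S → A | nrm n b = b}.Finite := by
  have hD : {w : List S | w.length ≤ n}.Finite := List.finite_length_le S n
  have : Finite ({w : List S | w.length ≤ n} → A) := by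
    have : Finite ({w : List S | w.length ≤ n} : Set (List S)) := hD
    infer_instance
  rw [← Set.finite_coe_iff]
  refine Finite.of_injective
    (fun b => fun w : {w : List S | w.length ≤ n} => (b : List S → A) w) ?_
  rintro ⟨b, hb⟩ ⟨c, hc⟩ hbc
  ext u
  by_cases hu : u.length ≤ n
  · exact congrFun hbc ⟨u, hu⟩
  · have h1 : b u = Classical.arbitrary A := by
      rw [← hb]; simp [nrm, hu]
    have h2 : c u = Classical.arbitrary A := by
      rw [← hc]; simp [nrm, hu]
    simp [h1, h2]

/-- The pattern with domain the words of length `≤ n` and labeling `b`. -/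
noncomputable def mkPat {S A : Type*} [Fintype S] (n : ℕ) (b : List S → A) :
    TreePattern S A where
  dom := {w : List S | w.length ≤ n}
  finite := List.finite_length_le S n
  prefixClosed := by
    intro w hw u hu
    exact le_trans hu.length_le hw
  label := b

theorem stmt_8 {S A : Type*} [Fintype S] [Nonempty S] [Fintype A] [Nonempty A] [TopologicalSpace A] [DiscreteTopology A] (X : Set (LTree S A)) (hX : IsTreeShift X) (h : POTP X) :
    IsFiniteType X := by
  classical
  obtain ⟨n, hn, hspec⟩ := h 1 one_pos
  refine ⟨mkPat n '' {b | nrm n b = b ∧ ¬ blockIn X (n + 1) b}, ?_, ?_⟩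
  · exact Set.Finite.image _ ((finite_nrm_fixed n).subset fun b hb => hb.1)
  · ext t
    constructor
    · -- X ⊆ treesOmitting F
      rintro ht p ⟨b, ⟨-, hbl⟩, rfl⟩
      rintro ⟨w, hw⟩
      exact hbl ⟨t, ht, w, fun u hu => hw u (Nat.lt_succ_iff.mp hu)⟩
    · -- treesOmitting F ⊆ X
      intro ht
      -- every block of `t` of height `n+1` appears in `X`
      have hblock : ∀ w : List S, blockIn X (n + 1) (fun u => t (w ++ u)) := by
        intro w
        by_contra hb
        have hb' : ¬ blockIn X (n + 1) (nrm n fun u => t (w ++ u)) := by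
          intro ⟨s, hs, v, hv⟩
          exact hb ⟨s, hs, v, fun u hu => by
            rw [hv u hu, nrm_eq n _ (Nat.lt_succ_iff.mp hu)]⟩
        have hnn : nrm n (nrm n fun u => t (w ++ u)) = nrm n fun u => t (w ++ u) := by
          funext u
          by_cases hu : u.length ≤ n <;> simp [nrm, hu]
        have hmem : mkPat n (nrm n fun u => t (w ++ u)) ∈
            mkPat n '' {b | nrm n b = b ∧ ¬ blockIn X (n + 1) b} :=
          ⟨_, ⟨hnn, hb'⟩, rfl⟩
        exact ht _ hmem ⟨w, fun u hu => (nrm_eq n (fun u => t (w ++ u)) hu).symm⟩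
      -- choose witnesses
      choose s hsX v hsv using hblock
      -- build the pseudo-orbit
      set T : List S → LTree S A := fun w => fun u => s w (v w ++ u) with hT
      have hTX : ∀ w, T w ∈ X := fun w => subtree_mem hX (v w) (s w) (hsX w)
      have hTt : ∀ w u : List S, u.length < n + 1 → T w u = t (w ++ u) := by
        intro w u hu
        exact hsv w u hu
      have hpo : IsPseudoOrbit X n T := by
        refine ⟨hTX, fun w i u hu => ?_⟩
        rw [hTt w (i :: u) (by simpa using Nat.succ_lt_succ hu),
          hTt (w ++ [i]) u (hu.trans (Nat.lt_succ_self n))]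
        simp
      obtain ⟨t', ht'X, ht'⟩ := hspec T hpo
      have : t' = t := by
        funext w
        have h0 := ht' w [] (by norm_num)
        have h1 := hTt w [] (Nat.succ_pos n)
        simp only [List.append_nil] at h0 h1
        rw [h0, h1]
      rwa [this] at ht'X
end

section
/- A tree-shift X is of finite type if and only if it has the pseudo-orbit-tracing property. -/
open Set

section Aux

variable {S A : Type*}

/-- Iterated shifts stay in a tree-shift. -/
lemma shiftWord_mem [TopologicalSpace A] {X : Set (LTree S A)} (hX : IsTreeShift X) :
    ∀ (v : List S) (t : LTree S A), t ∈ X → (fun u => t (v ++ u)) ∈ X := by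
  intro v
  induction v with
  | nil => intro t ht; simpa using ht
  | cons i v' ih =>
      intro t ht
      have h1 : shift i t ∈ X := hX.2 i ⟨t, ht, rfl⟩
      have h2 := ih (shift i t) h1
      exact h2

/-- Peeling lemma for pseudo-orbits. -/
lemma peel [TopologicalSpace A] {X : Set (LTree S A)} {n : ℕ} {T : List S → LTree S A}
    (hT : IsPseudoOrbit X n T) :
    ∀ u : List S, u.length ≤ n → ∀ w : List S, T w u = T (w ++ u) [] := by
  intro u
  induction u with
  | nil => intro _ w; simp
  | cons i u' ih =>
      intro hu w
      have h1 : T w (i :: u') = T (w ++ [i]) u' := by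
        apply hT.2 w i u'
        simpa using Nat.lt_of_succ_le hu
      have h2 := ih (le_trans (Nat.le_succ _) hu) (w ++ [i])
      rw [h1, h2]
      simp

end Aux

theorem stmt_9 {S A : Type*} [Fintype S] [Nonempty S] [Fintype A] [Nonempty A] [TopologicalSpace A] [DiscreteTopology A] (X : Set (LTree S A)) (hX : IsTreeShift X) :
    IsFiniteType X ↔ POTP X := by
  constructor
  · -- Finite type → POTP
    rintro ⟨F, hF, hXF⟩
    intro m hm
    -- bound on the domains of patterns in F
    have hLfin : (⋃ p ∈ F, List.length '' p.dom).Finite :=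
      hF.biUnion fun p _ => p.finite.image _
    obtain ⟨M, hM⟩ := hLfin.bddAbove
    have hMb : ∀ p ∈ F, ∀ u ∈ p.dom, u.length ≤ M := by
      intro p hp u hu
      exact hM (Set.mem_biUnion hp ⟨u, hu, rfl⟩)
    refine ⟨max m M, lt_of_lt_of_le hm (le_max_left _ _), ?_⟩
    intro T hT
    set t : LTree S A := fun w => T w [] with ht_def
    have key : ∀ u : List S, u.length ≤ max m M → ∀ w, T w u = T (w ++ u) [] :=
      peel hT
    have htX : t ∈ X := by
      rw [hXF]
      intro p hp
      rintro ⟨w, hw⟩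
      have hTwX : T w ∈ treesOmitting F := hXF ▸ hT.1 w
      refine hTwX p hp ⟨[], ?_⟩
      intro u hu
      rw [List.nil_append,
        key u (le_trans (hMb p hp u hu) (le_max_right _ _)) w]
      exact hw u hu
    refine ⟨t, htX, ?_⟩
    intro w u hu
    exact (key u (le_trans hu.le (le_max_left _ _)) w).symm
  · -- POTP → Finite type
    intro hP
    obtain ⟨n, hn, hn'⟩ := hP 1 one_pos
    have dA : A := Classical.arbitrary A
    have hDfin : Set.Finite {u : List S | u.length < n + 1} := List.finite_length_lt S (n + 1)
    have hpc : ∀ w ∈ {u : List S | u.length < n + 1}, ∀ u : List S,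
        u <+: w → u ∈ {u : List S | u.length < n + 1} := by
      intro w hw u huw
      exact lt_of_le_of_lt huw.length_le hw
    set mk : (List S → A) → TreePattern S A :=
      fun b => ⟨{u : List S | u.length < n + 1}, hDfin, hpc, b⟩ with hmk
    set B : Set (List S → A) :=
      {b | (∀ u : List S, ¬ u.length < n + 1 → b u = dA) ∧ ¬ blockIn X (n + 1) b} with hB
    have hBfin : B.Finite := by
      have hfin : Finite {u : List S // u.length < n + 1} := hDfin.to_subtype
      apply Set.Finite.of_finite_image (f := fun (b : List S → A)
        (u : {u : List S // u.length < n + 1}) => b u.1)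
      · exact Set.toFinite _
      · intro b1 hb1 b2 hb2 heq
        funext u
        by_cases h : u.length < n + 1
        · exact congrFun heq ⟨u, h⟩
        · rw [hb1.1 u h, hb2.1 u h]
    refine ⟨mk '' B, hBfin.image _, ?_⟩
    apply Set.eq_of_subset_of_subset
    · -- X ⊆ treesOmitting (mk '' B)
      intro t ht p hp
      obtain ⟨b, hbB, rfl⟩ := hp
      rintro ⟨w, hw⟩
      exact hbB.2 ⟨t, ht, w, fun u hu => hw u hu⟩
    · -- treesOmitting (mk '' B) ⊆ X
      intro t ht
      have hblk : ∀ w : List S, blockIn X (n + 1)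
          (fun u => if u.length < n + 1 then t (w ++ u) else dA) := by
        intro w
        by_contra hc
        have hmem : mk (fun u => if u.length < n + 1 then t (w ++ u) else dA) ∈ mk '' B :=
          ⟨_, ⟨fun u hu => if_neg hu, hc⟩, rfl⟩
        refine ht _ hmem ⟨w, ?_⟩
        intro u hu
        exact (if_pos hu).symm
      choose tw htw v hv using hblk
      set T : List S → LTree S A := fun w u => tw w (v w ++ u) with hT_def
      have hTX : ∀ w, T w ∈ X := fun w => shiftWord_mem hX (v w) (tw w) (htw w)
      have hTeq : ∀ w u, u.length < n + 1 → T w u = t (w ++ u) := by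
        intro w u hu
        have := hv w u hu
        rw [hT_def]
        simp only [this, if_pos hu]
      have hpo : IsPseudoOrbit X n T := by
        refine ⟨hTX, ?_⟩
        intro w i u hu
        rw [hTeq w (i :: u) (by simpa using Nat.succ_lt_succ hu),
          hTeq (w ++ [i]) u (hu.trans (Nat.lt_succ_self n))]
        simp
      obtain ⟨t', ht'X, ht'tr⟩ := hn' T hpo
      have : t' = t := by
        funext w
        have h1 := ht'tr w [] (by norm_num)
        rw [List.append_nil] at h1
        rw [h1, hTeq w [] (Nat.succ_pos n), List.append_nil]
      exact this ▸ ht'X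
end

section
/- If a tree-shift X has the finite pseudo-orbit-tracing property, then X has the pseudo-orbit-tracing property. -/
open Set

theorem stmt_11 {S A : Type*} [Fintype S] [Nonempty S] [Fintype A] [Nonempty A] [TopologicalSpace A] [DiscreteTopology A] (X : Set (LTree S A)) (hX : IsTreeShift X) (h : FinPOTP X) :
    POTP X := by
  intro m hm
  obtain ⟨n, hn, hfin⟩ := h m hm
  refine ⟨n, hn, ?_⟩
  intro T hT
  have hEx : ∀ N : ℕ, ∃ t ∈ X, FinTraces m (N + 1) T t := by
    intro N
    exact hfin (N + 1) (Nat.succ_pos N) T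
      ⟨fun w _ => hT.1 w, fun w _ i u hu => hT.2 w i u hu⟩
  choose ts hts htr using hEx
  have hXc : IsCompact X := hX.1.isCompact
  have hle : Filter.map ts Filter.atTop ≤ Filter.principal X := by
    rw [Filter.le_principal_iff, Filter.mem_map]
    exact Filter.univ_mem' hts
  obtain ⟨t, htX, hcl⟩ := hXc.exists_clusterPt hle
  refine ⟨t, htX, ?_⟩
  intro w u hu
  have hcont : Continuous fun s : LTree S A => s (w ++ u) := continuous_apply _
  have hopen : IsOpen {s : LTree S A | s (w ++ u) = t (w ++ u)} := by
    have : IsOpen ({t (w ++ u)} : Set A) := isOpen_discrete _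
    exact this.preimage hcont
  have hU : {s : LTree S A | s (w ++ u) = t (w ++ u)} ∈ nhds t :=
    hopen.mem_nhds rfl
  have hV : ts '' Set.Ici w.length ∈ Filter.map ts Filter.atTop := by
    apply Filter.mem_map.mpr
    filter_upwards [Filter.mem_atTop w.length] with N hN
    exact ⟨N, hN, rfl⟩
  obtain ⟨s, hsU, hsV⟩ := (clusterPt_iff_nonempty.mp hcl) hU hV
  obtain ⟨N, hN, rfl⟩ := hsV
  have : ts N (w ++ u) = T w u := htr N w (Nat.lt_succ_of_le hN) u hu
  rw [← hsU, this]
end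

section
/- If a tree-shift X has the pseudo-orbit-tracing property, then X is topologically stable. -/
open Set

lemma apply_eq_of_treeDist_lt {S A : Type*} {s t : LTree S A} {n : ℕ}
    (h : treeDist s t < 2 ^ (-(n : ℤ))) {u : List S} (hu : u.length < n) : s u = t u := by
  by_contra hne
  have hst : s ≠ t := fun h' => hne (by rw [h'])
  rw [treeDist, if_neg hst] at h
  have hlt : -((sInf {n : ℕ | ∃ w : List S, w.length = n ∧ s w ≠ t w} : ℕ) : ℤ) - 1
      < -(n : ℤ) := by
    exact lt_of_not_ge fun hle => absurd h (not_lt.mpr (zpow_le_zpow_right₀ one_le_two hle))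
  have hnk : n ≤ sInf {n : ℕ | ∃ w : List S, w.length = n ∧ s w ≠ t w} := by omega
  exact Nat.notMem_of_lt_sInf (lt_of_lt_of_le hu hnk) ⟨u, rfl, hne⟩

lemma treeDist_le_of_agree {S A : Type*} {s t : LTree S A} {m : ℕ}
    (h : ∀ u : List S, u.length < m → s u = t u) :
    treeDist s t ≤ 2 ^ (-(m : ℤ) - 1) := by
  rw [treeDist]
  split_ifs with hst
  · positivity
  · have hne : {n : ℕ | ∃ w : List S, w.length = n ∧ s w ≠ t w}.Nonempty := by
      by_contra hcon
      exact hst (funext fun w => by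
        by_contra hw
        exact hcon ⟨w.length, w, rfl, hw⟩)
    obtain ⟨w, hw, hwne⟩ := Nat.sInf_mem hne
    have hmk : m ≤ sInf {n : ℕ | ∃ w : List S, w.length = n ∧ s w ≠ t w} := by
      by_contra hc
      push_neg at hc
      exact hwne (h w (by rw [hw]; exact hc))
    apply zpow_le_zpow_right₀ one_le_two
    omega

def iterτ {S A : Type*} {X : Set (LTree S A)} (τ : S → X → X) : List S → X → X
  | [], t => t
  | i :: w, t => iterτ τ w (τ i t)

lemma iterτ_append {S A : Type*} {X : Set (LTree S A)} (τ : S → X → X) (w v : List S) (t : X) :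
    iterτ τ (w ++ v) t = iterτ τ v (iterτ τ w t) := by
  induction w generalizing t with
  | nil => rfl
  | cons i w ih => simp [iterτ, ih]

lemma iterτ_continuous {S A : Type*} [TopologicalSpace A] {X : Set (LTree S A)}
    (τ : S → X → X) (hτ : ∀ i, Continuous (τ i)) : ∀ w, Continuous (iterτ τ w)
  | [] => continuous_id
  | i :: w => (iterτ_continuous τ hτ w).comp (hτ i)

theorem stmt_12 {S A : Type*} [Fintype S] [Nonempty S] [Fintype A] [Nonempty A] [TopologicalSpace A] [DiscreteTopology A] (X : Set (LTree S A)) (hX : IsTreeShift X) (h : POTP X) :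
    TopStable X := by
  intro ε hε
  obtain ⟨m₀, hm₀⟩ := exists_pow_lt_of_lt_one hε (by norm_num : (1:ℝ)/2 < 1)
  obtain ⟨n, hn, htr⟩ := h (m₀ + 1) (Nat.succ_pos _)
  refine ⟨2 ^ (-(n : ℤ)), by positivity, ?_⟩
  intro τ hτc hτd
  have hpo : ∀ t : X, IsPseudoOrbit X n (fun w => (iterτ τ w t).1) := by
    intro t
    refine ⟨fun w => (iterτ τ w t).2, ?_⟩
    intro w i u hu
    have h1 : iterτ τ (w ++ [i]) t = τ i (iterτ τ w t) := by
      rw [iterτ_append]; rfl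
    have h2 := apply_eq_of_treeDist_lt (hτd i (iterτ τ w t)) hu
    simp only [h1]
    exact h2.symm
  have key : ∀ t : X, (fun w => (iterτ τ w t).1 ([] : List S)) ∈ X ∧
      ∀ u : List S, u.length < m₀ + 1 → (iterτ τ u t).1 [] = t.1 u := by
    intro t
    obtain ⟨s, hsX, hs⟩ := htr _ (hpo t)
    have hse : (fun w => (iterτ τ w t).1 ([] : List S)) = s := by
      funext w
      have := hs w [] (Nat.succ_pos _)
      simpa using this.symm
    refine ⟨hse ▸ hsX, fun u hu => ?_⟩
    have h1 := hs [] u hu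
    have h2 := congrFun hse u
    rw [h2]
    simpa [iterτ] using h1
  refine ⟨fun t => ⟨fun w => (iterτ τ w t).1 [], (key t).1⟩, ?_, ?_, ?_⟩
  · refine Continuous.subtype_mk (continuous_pi fun w => ?_) _
    exact (continuous_apply ([] : List S)).comp
      (continuous_subtype_val.comp (iterτ_continuous τ hτc w))
  · intro t
    have hle := treeDist_le_of_agree (fun u hu => (key t).2 u hu)
    refine lt_of_le_of_lt hle ?_
    have heq : (2:ℝ) ^ (-((m₀ + 1 : ℕ) : ℤ) - 1) = ((1:ℝ)/2) ^ (m₀ + 2) := by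
      rw [show (-((m₀ + 1 : ℕ) : ℤ) - 1) = -((m₀ + 2 : ℕ) : ℤ) by push_cast; ring,
        zpow_neg, zpow_natCast, one_div, inv_pow]
    rw [heq]
    calc ((1:ℝ)/2) ^ (m₀ + 2) ≤ ((1:ℝ)/2) ^ m₀ :=
          pow_le_pow_of_le_one (by norm_num) (by norm_num) (by omega)
      _ < ε := hm₀
  · intro i t
    rfl
end

section
/- Every tree-shift of finite type is topologically stable. -/
open Set

lemma agree_of_dist_lt {S A : Type*} {s t : LTree S A} {n : ℕ}
    (h : treeDist s t < (2:ℝ)^(-(n:ℤ)-1)) : ∀ w : List S, w.length ≤ n → s w = t w := by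
  intro w hw
  by_cases hst : s = t
  · rw [hst]
  · rw [treeDist, if_neg hst] at h
    have hj : (n : ℕ) < sInf {n : ℕ | ∃ w : List S, w.length = n ∧ s w ≠ t w} := by
      have := (zpow_lt_zpow_iff_right₀ (a := (2:ℝ)) one_lt_two).mp h
      omega
    by_contra hne
    have hmem : w.length ∈ {n : ℕ | ∃ w : List S, w.length = n ∧ s w ≠ t w} :=
      ⟨w, rfl, hne⟩
    have := Nat.sInf_le hmem
    omega

lemma dist_lt_of_agree {S A : Type*} {s t : LTree S A} {n : ℕ}
    (h : ∀ w : List S, w.length ≤ n → s w = t w) : treeDist s t < (2:ℝ)^(-(n:ℤ)-1) := by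
  by_cases hst : s = t
  · rw [treeDist, if_pos hst]
    positivity
  · rw [treeDist, if_neg hst]
    have hne : {n : ℕ | ∃ w : List S, w.length = n ∧ s w ≠ t w}.Nonempty := by
      obtain ⟨w, hw⟩ := Function.ne_iff.mp hst
      exact ⟨w.length, w, rfl, hw⟩
    obtain ⟨w, hwlen, hwne⟩ := Nat.sInf_mem hne
    have hn : n < sInf {n : ℕ | ∃ w : List S, w.length = n ∧ s w ≠ t w} := by
      by_contra hc
      exact hwne (h w (by omega))
    apply zpow_lt_zpow_right₀ one_lt_two
    omega

/-- Transport along a pseudo-orbit. -/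
lemma transport_po {S A : Type*} {T : List S → LTree S A} {n : ℕ}
    (hT : ∀ (w : List S) (i : S) (u : List S), u.length < n → T w (i :: u) = T (w ++ [i]) u) :
    ∀ (u : List S), u.length ≤ n → ∀ w, T w u = T (w ++ u) [] := by
  intro u
  induction u with
  | nil => intro _ w; simp
  | cons i u ih =>
    intro hu w
    simp only [List.length_cons] at hu
    rw [hT w i u (by omega), ih (by omega) (w ++ [i]), List.append_assoc]
    rfl

lemma patBound {S A : Type*} {F : Set (TreePattern S A)} (hF : F.Finite) :
    ∃ K : ℕ, ∀ p ∈ F, ∀ u ∈ p.dom, u.length ≤ K := by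
  have hfin : (⋃ p ∈ F, p.dom).Finite := hF.biUnion (fun p _ => p.finite)
  have hfin2 : (List.length '' ⋃ p ∈ F, p.dom).Finite := hfin.image _
  obtain ⟨K, hK⟩ := hfin2.bddAbove
  exact ⟨K, fun p hp u hu => hK ⟨u, Set.mem_biUnion hp hu, rfl⟩⟩

theorem stmt_13 {S A : Type*} [Fintype S] [Nonempty S] [Fintype A] [Nonempty A] [TopologicalSpace A] [DiscreteTopology A] (X : Set (LTree S A)) (hX : IsTreeShift X) (h : IsFiniteType X) :
    TopStable X := by
  obtain ⟨F, hF, hXF⟩ := h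
  -- choose m with 2^(-m-1) < ε
  intro ε hε
  obtain ⟨m, hm⟩ := exists_pow_lt_of_lt_one hε (by norm_num : (1:ℝ)/2 < 1)
  have hmε : (2:ℝ)^(-(m:ℤ)-1) < ε := by
    calc (2:ℝ)^(-(m:ℤ)-1) = ((1:ℝ)/2)^(m+1) := by
          rw [one_div, inv_pow, ← zpow_natCast]
          rw [← zpow_neg]
          congr 1
          push_cast
          ring
      _ ≤ ((1:ℝ)/2)^m := by
          apply pow_le_pow_of_le_one (by norm_num) (by norm_num)
          omega
      _ < ε := hm
  obtain ⟨K, hK⟩ := patBound hF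
  set n : ℕ := m + K + 2 with hn
  refine ⟨(2:ℝ)^(-(n:ℤ)-1), by positivity, ?_⟩
  intro τ hτc hτ
  -- the iterated map
  set Tt : X → List S → X := fun t w => List.foldl (fun s i => τ i s) t w with hTt
  have hTcons : ∀ (t : X) (i : S) (w : List S), Tt t (i :: w) = Tt (τ i t) w := by
    intro t i w; simp [hTt]
  have hTsnoc : ∀ (t : X) (w : List S) (i : S), Tt t (w ++ [i]) = τ i (Tt t w) := by
    intro t w i; simp [hTt]
  -- pseudo-orbit property
  have hpo : ∀ (t : X) (w : List S) (i : S) (u : List S), u.length < n →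
      (Tt t w).1 (i :: u) = (Tt t (w ++ [i])).1 u := by
    intro t w i u hu
    rw [hTsnoc]
    exact (agree_of_dist_lt (hτ i (Tt t w)) u (by omega)).symm
  have htrans : ∀ (t : X) (u : List S), u.length ≤ n → ∀ w,
      (Tt t w).1 u = (Tt t (w ++ u)).1 [] :=
    fun t => transport_po (T := fun w => (Tt t w).1) (hpo t)
  -- define φ
  set φ0 : X → LTree S A := fun t w => (Tt t w).1 [] with hφ0
  have hφ0mem : ∀ t : X, φ0 t ∈ X := by
    intro t
    rw [hXF]
    intro p hp hex
    obtain ⟨w, hw⟩ := hex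
    have hTX : (Tt t w).1 ∈ treesOmitting F := by rw [← hXF]; exact (Tt t w).2
    refine hTX p hp ⟨[], fun u hu => ?_⟩
    have hlen : u.length ≤ n := by have := hK p hp u hu; omega
    rw [List.nil_append, htrans t u hlen w]
    exact hw u hu
  set φ : X → X := fun t => ⟨φ0 t, hφ0mem t⟩ with hφ
  refine ⟨φ, ?_, ?_, ?_⟩
  · -- continuity
    apply Continuous.subtype_mk
    apply continuous_pi
    intro w
    have hc : ∀ w : List S, Continuous (fun t : X => Tt t w) := by
      intro w
      induction w with
      | nil =>
        have he : (fun t : X => Tt t []) = id := by funext t; simp [hTt]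
        rw [he]; exact continuous_id
      | cons i w ih =>
        have he : (fun t : X => Tt t (i :: w)) = (fun t : X => Tt t w) ∘ τ i := by
          funext t; exact hTcons t i w
        rw [he]; exact ih.comp (hτc i)
    exact ((continuous_apply ([] : List S)).comp continuous_subtype_val).comp (hc w)
  · -- distance
    intro t
    have : treeDist (φ t).1 t.1 < (2:ℝ)^(-(m:ℤ)-1) := by
      apply dist_lt_of_agree
      intro u hu
      have h0 : Tt t [] = t := by simp [hTt]
      have h1 := htrans t u (by omega) []
      simp only [List.nil_append] at h1
      calc (φ t).1 u = (Tt t u).1 [] := rfl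
        _ = (Tt t []).1 u := h1.symm
        _ = t.1 u := by rw [h0]
    linarith
  · -- conjugacy
    intro i t
    funext w
    show φ0 t (i :: w) = φ0 (τ i t) w
    rw [hφ0]
    simp only
    rw [hTcons]
end

section
/- If X is a topologically stable tree-shift with no isolated points, then X has the finite pseudo-orbit-tracing property. -/
open Set

section Aux

open Filter Topology

variable {S A : Type*}

/-- Two trees agree on all words of length `< k`. -/
def AgreeUpTo (k : ℕ) (s t : LTree S A) : Prop :=
  ∀ u : List S, u.length < k → s u = t u

lemma AgreeUpTo.symm {k : ℕ} {s t : LTree S A} (h : AgreeUpTo k s t) : AgreeUpTo k t s :=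
  fun u hu => (h u hu).symm

lemma AgreeUpTo.mono {k k' : ℕ} {s t : LTree S A} (h : AgreeUpTo k s t) (hk : k' ≤ k) :
    AgreeUpTo k' s t := fun u hu => h u (lt_of_lt_of_le hu hk)

lemma treeDist_lt_of_agree {k : ℕ} {s t : LTree S A} (h : AgreeUpTo k s t) :
    treeDist s t < (2 : ℝ) ^ (-(k : ℤ)) := by
  unfold treeDist
  split_ifs with he
  · positivity
  · have hne : {n : ℕ | ∃ w : List S, w.length = n ∧ s w ≠ t w}.Nonempty := by
      by_contra hc
      apply he
      funext w
      by_contra hw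
      exact hc ⟨w.length, w, rfl, hw⟩
    obtain ⟨w, hwl, hwne⟩ := Nat.sInf_mem hne
    have hkj : k ≤ sInf {n : ℕ | ∃ w : List S, w.length = n ∧ s w ≠ t w} := by
      by_contra hc
      push_neg at hc
      exact hwne (h w (by omega))
    have hexp : (-(sInf {n : ℕ | ∃ w : List S, w.length = n ∧ s w ≠ t w} : ℕ) : ℤ) - 1
        < -(k : ℤ) := by
      have : (k : ℤ) ≤ (sInf {n : ℕ | ∃ w : List S, w.length = n ∧ s w ≠ t w} : ℕ) := by
        exact_mod_cast hkj
      omega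
    exact zpow_lt_zpow_right₀ one_lt_two hexp

lemma agree_of_treeDist_lt {k : ℕ} {s t : LTree S A}
    (h : treeDist s t < (2 : ℝ) ^ (-(k : ℤ))) : AgreeUpTo k s t := by
  intro u hu
  by_contra hne
  have hst : s ≠ t := by rintro rfl; exact hne rfl
  unfold treeDist at h
  rw [if_neg hst] at h
  have hle : sInf {n : ℕ | ∃ w : List S, w.length = n ∧ s w ≠ t w} ≤ u.length :=
    Nat.sInf_le ⟨u, rfl, hne⟩
  have hlt := (zpow_lt_zpow_iff_right₀ (one_lt_two : (1:ℝ) < 2)).mp h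
  have : (u.length : ℤ) < (k : ℤ) := by exact_mod_cast hu
  have : ((sInf {n : ℕ | ∃ w : List S, w.length = n ∧ s w ≠ t w} : ℕ) : ℤ) ≤ u.length := by
    exact_mod_cast hle
  omega

lemma isClopen_agree [Finite S] [TopologicalSpace A] [DiscreteTopology A] (L : ℕ)
    (s : LTree S A) : IsClopen {t : LTree S A | AgreeUpTo L t s} := by
  have hset : {t : LTree S A | AgreeUpTo L t s}
      = ⋂ u ∈ {u : List S | u.length < L}, (fun t : LTree S A => t u) ⁻¹' {s u} := by
    ext t
    simp only [Set.mem_setOf_eq, Set.mem_iInter, Set.mem_preimage, Set.mem_singleton_iff]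
    exact Iff.rfl
  rw [hset]
  constructor
  · exact isClosed_biInter fun u _ =>
      (isClosed_discrete {s u}).preimage (continuous_apply u)
  · exact (List.finite_length_lt S L).isOpen_biInter fun u _ =>
      (isOpen_discrete {s u}).preimage (continuous_apply u)

open Classical in
/-- The perturbed shift map, defined piecewise on cylinders. -/
noncomputable def tauAux (L : ℕ) (f g : List S → LTree S A) (h : LTree S A → LTree S A) :
    List (List S) → LTree S A → LTree S A
  | [], t => h t
  | w :: ws, t => if AgreeUpTo L t (f w) then g w else tauAux L f g h ws t

lemma tauAux_mem {X : Set (LTree S A)} {L : ℕ} {f g : List S → LTree S A}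
    {h : LTree S A → LTree S A} (hh : ∀ t ∈ X, h t ∈ X) :
    ∀ ws : List (List S), (∀ w ∈ ws, g w ∈ X) → ∀ t ∈ X, tauAux L f g h ws t ∈ X
  | [], _, t, ht => hh t ht
  | w :: ws, hg, t, ht => by
    simp only [tauAux]
    split_ifs with hc
    · exact hg w List.mem_cons_self
    · exact tauAux_mem hh ws (fun w' hw' => hg w' (List.mem_cons_of_mem _ hw')) t ht

lemma tauAux_agree {n L : ℕ} {f g : List S → LTree S A} {h : LTree S A → LTree S A} :
    ∀ ws : List (List S),
      (∀ w ∈ ws, ∀ t : LTree S A, AgreeUpTo L t (f w) → AgreeUpTo n (g w) (h t)) →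
      ∀ t, AgreeUpTo n (tauAux L f g h ws t) (h t)
  | [], _, t => fun _ _ => rfl
  | w :: ws, hyp, t => by
    simp only [tauAux]
    split_ifs with hc
    · exact hyp w List.mem_cons_self t hc
    · exact tauAux_agree ws (fun w' hw' => hyp w' (List.mem_cons_of_mem _ hw')) t

lemma tauAux_eq {L : ℕ} {f g : List S → LTree S A} {h : LTree S A → LTree S A}
    {t : LTree S A} {w : List S} :
    ∀ ws : List (List S), w ∈ ws → AgreeUpTo L t (f w) →
      (∀ w' ∈ ws, AgreeUpTo L t (f w') → w' = w) → tauAux L f g h ws t = g w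
  | [], hw, _, _ => absurd hw List.not_mem_nil
  | a :: ws, hw, hagree, huniq => by
    simp only [tauAux]
    split_ifs with hc
    · rw [huniq a List.mem_cons_self hc]
    · have hwws : w ∈ ws := by
        rcases List.mem_cons.mp hw with rfl | h'
        · exact absurd hagree hc
        · exact h'
      exact tauAux_eq ws hwws hagree fun w' hw' => huniq w' (List.mem_cons_of_mem _ hw')

lemma tauAux_continuous [Finite S] [TopologicalSpace A] [DiscreteTopology A]
    (L : ℕ) (f g : List S → LTree S A) {h : LTree S A → LTree S A} (hh : Continuous h) :
    ∀ ws : List (List S), Continuous (tauAux L f g h ws)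
  | [] => hh
  | w :: ws => by
    have ih := tauAux_continuous L f g hh ws
    classical
    show Continuous fun t : LTree S A =>
      if AgreeUpTo L t (f w) then g w else tauAux L f g h ws t
    refine Continuous.if ?_ continuous_const ih
    intro a ha
    rw [(isClopen_agree L (f w)).frontier_eq] at ha
    exact absurd ha (Set.notMem_empty a)

lemma accPt_exists {α : Type*} [TopologicalSpace α] [T1Space α] {x : α} {X U F : Set α}
    (hacc : AccPt x (𝓟 X)) (hU : IsOpen U) (hx : x ∈ U) (hF : F.Finite) :
    ∃ p ∈ X, p ∈ U ∧ p ∉ F := by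
  have hV : IsOpen (U \ (F \ {x})) := hU.sdiff (hF.subset Set.diff_subset).isClosed
  have hxV : x ∈ U \ (F \ {x}) := ⟨hx, fun h => h.2 rfl⟩
  have hmem : (U \ (F \ {x})) \ {x} ∈ 𝓝[≠] x := by
    rw [mem_nhdsWithin]
    exact ⟨U \ (F \ {x}), hV, hxV, fun y hy => ⟨hy.1, hy.2⟩⟩
  haveI : (𝓝[≠] x ⊓ 𝓟 X).NeBot := hacc
  obtain ⟨p, hp⟩ := Filter.nonempty_of_mem
    (Filter.inter_mem (Filter.mem_inf_of_left hmem)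
      (Filter.mem_inf_of_right (Filter.mem_principal_self X)))
  refine ⟨p, hp.2, hp.1.1.1, fun hpF => hp.1.1.2 ⟨hpF, hp.1.2⟩⟩

lemma exists_perturb [Finite S] [TopologicalSpace A] [DiscreteTopology A] [T1Space A]
    {X : Set (LTree S A)} (hperf : Preperfect X) (K : ℕ) (T : List S → LTree S A) :
    ∀ ws : List (List S), ws.Nodup → (∀ w ∈ ws, T w ∈ X) →
      ∃ f : List S → LTree S A, (∀ w ∈ ws, f w ∈ X ∧ AgreeUpTo K (f w) (T w)) ∧
        ∀ w ∈ ws, ∀ w' ∈ ws, f w = f w' → w = w'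
  | [], _, _ => ⟨T, fun w hw => absurd hw List.not_mem_nil,
      fun w hw => absurd hw List.not_mem_nil⟩
  | a :: ws, hnd, hmem => by
    classical
    obtain ⟨hand, hndws⟩ := List.nodup_cons.mp hnd
    obtain ⟨f, hf, hinj⟩ := exists_perturb hperf K T ws hndws
      (fun w hw => hmem w (List.mem_cons_of_mem _ hw))
    have hacc := hperf (T a) (hmem a List.mem_cons_self)
    obtain ⟨p, hpX, hpU, hpF⟩ := accPt_exists hacc (isClopen_agree K (T a)).2
      (fun u _ => rfl) ((ws.finite_toSet.image f))
    refine ⟨Function.update f a p, ?_, ?_⟩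
    · intro w hw
      rcases List.mem_cons.mp hw with h1 | h1
      · rw [h1, Function.update_self]
        exact ⟨hpX, hpU⟩
      · have hwa : w ≠ a := fun h => hand (h ▸ h1)
        rw [Function.update_of_ne hwa]
        exact hf w h1
    · intro w hw w' hw' heq
      rcases List.mem_cons.mp hw with h1 | h1
      · rcases List.mem_cons.mp hw' with h2 | h2
        · rw [h1, h2]
        · have hw'a : w' ≠ a := fun h => hand (h ▸ h2)
          rw [h1, Function.update_self, Function.update_of_ne hw'a] at heq
          exact absurd ⟨w', h2, heq.symm⟩ hpF
      · rcases List.mem_cons.mp hw' with h2 | h2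
        · have hwa : w ≠ a := fun h => hand (h ▸ h1)
          rw [h2, Function.update_of_ne hwa, Function.update_self] at heq
          exact absurd ⟨w, h1, heq⟩ hpF
        · have hwa : w ≠ a := fun h => hand (h ▸ h1)
          have hw'a : w' ≠ a := fun h => hand (h ▸ h2)
          rw [Function.update_of_ne hwa, Function.update_of_ne hw'a] at heq
          exact hinj w h1 w' h2 heq

lemma exists_sep_point (x : LTree S A) (f : List S → LTree S A) :
    ∀ ws : List (List S), ∃ L : ℕ, ∀ w ∈ ws, AgreeUpTo L x (f w) → x = f w
  | [] => ⟨0, fun w hw => absurd hw List.not_mem_nil⟩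
  | a :: ws => by
    obtain ⟨L₀, hL₀⟩ := exists_sep_point x f ws
    by_cases hxa : x = f a
    · refine ⟨L₀, fun w hw h => ?_⟩
      rcases List.mem_cons.mp hw with rfl | hw'
      · exact hxa
      · exact hL₀ w hw' h
    · have hexu : ∃ u : List S, x u ≠ f a u := by
        by_contra hc
        push_neg at hc
        exact hxa (funext hc)
      obtain ⟨u, hu⟩ := hexu
      refine ⟨max L₀ (u.length + 1), fun w hw h => ?_⟩
      rcases List.mem_cons.mp hw with rfl | hw'
      · exact absurd (h u (lt_of_lt_of_le (Nat.lt_succ_self _) (le_max_right _ _))) hu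
      · exact hL₀ w hw' (h.mono (le_max_left _ _))

lemma exists_sep (f : List S → LTree S A) :
    ∀ ws : List (List S), ∃ L : ℕ, ∀ w ∈ ws, ∀ w' ∈ ws, AgreeUpTo L (f w) (f w') → f w = f w'
  | [] => ⟨0, fun w hw => absurd hw List.not_mem_nil⟩
  | a :: ws => by
    obtain ⟨L₀, hL₀⟩ := exists_sep f ws
    obtain ⟨L₁, hL₁⟩ := exists_sep_point (f a) f (a :: ws)
    refine ⟨max L₀ L₁, fun w hw w' hw' h => ?_⟩
    rcases List.mem_cons.mp hw with rfl | h1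
    · exact hL₁ w' hw' (h.mono (le_max_right _ _))
    · rcases List.mem_cons.mp hw' with rfl | h2
      · exact (hL₁ w (List.mem_cons_of_mem _ h1) (h.symm.mono (le_max_right _ _))).symm
      · exact hL₀ w h1 w' h2 (h.mono (le_max_left _ _))

lemma shift_foldl : ∀ (w : List S) (t : LTree S A) (u : List S),
    List.foldl (fun s i => shift i s) t w u = t (w ++ u)
  | [], _, _ => rfl
  | i :: w, t, u => by
    simp only [List.foldl_cons]
    rw [shift_foldl w (shift i t) u]
    rfl

end Aux

theorem stmt_14 {S A : Type*} [Fintype S] [Nonempty S] [Fintype A] [Nonempty A] [TopologicalSpace A] [DiscreteTopology A] (X : Set (LTree S A)) (hX : IsTreeShift X)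
    (hstab : TopStable X) (hperf : Preperfect X) :
    FinPOTP X := by
  classical
  intro m hm
  obtain ⟨δ, hδ, hstabδ⟩ := hstab ((2 : ℝ) ^ (-(m : ℤ))) (by positivity)
  obtain ⟨n₀, hn₀⟩ : ∃ n₀ : ℕ, (2 : ℝ) ^ (-(n₀ : ℤ)) ≤ δ := by
    obtain ⟨k, hk⟩ := exists_pow_lt_of_lt_one hδ (by norm_num : (1 / 2 : ℝ) < 1)
    refine ⟨k, le_of_lt ?_⟩
    calc (2 : ℝ) ^ (-(k : ℤ)) = (1 / 2 : ℝ) ^ k := by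
          rw [one_div, inv_pow, ← zpow_natCast (2 : ℝ) k, ← zpow_neg]
      _ < δ := hk
  set n := max m n₀ + 1 with hn
  have hnm : m ≤ n := le_trans (le_max_left _ _) (Nat.le_succ _)
  have hnδ : (2 : ℝ) ^ (-(n : ℤ)) ≤ δ := by
    refine le_trans (zpow_le_zpow_right₀ one_le_two ?_) hn₀
    have : n₀ ≤ n := le_trans (le_max_right m n₀) (Nat.le_succ _)
    omega
  refine ⟨n, Nat.succ_pos _, ?_⟩
  intro N hN T hT
  obtain ⟨hTX, hTpo⟩ := hT
  -- enumerate the words of length `< N`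
  have hfin : {w : List S | w.length < N}.Finite := List.finite_length_lt S N
  set ws : List (List S) := hfin.toFinset.toList with hws
  have hmemws : ∀ w : List S, w ∈ ws ↔ w.length < N := by
    intro w
    rw [hws, Finset.mem_toList, Set.Finite.mem_toFinset]
    exact Iff.rfl
  have hndws : ws.Nodup := Finset.nodup_toList _
  -- the perturbed (injective) pseudo-orbit
  obtain ⟨T', hT', hinj⟩ := exists_perturb hperf (n + 1) T ws hndws
    (fun w hw => hTX w ((hmemws w).1 hw))
  -- a separation depth for the perturbed points
  obtain ⟨L₀, hL₀⟩ := exists_sep T' ws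
  set L := max L₀ (n + 1) with hL
  -- words with `length + 1 < N`
  set ws' : List (List S) := ws.filter (fun w => decide (w.length + 1 < N)) with hws'
  have hmemws' : ∀ w : List S, w ∈ ws' ↔ w.length + 1 < N := by
    intro w
    rw [hws', List.mem_filter]
    constructor
    · intro ⟨_, h⟩
      exact of_decide_eq_true h
    · intro h
      exact ⟨(hmemws w).2 (by omega), decide_eq_true h⟩
  have hgmem : ∀ i : S, ∀ w ∈ ws', T' (w ++ [i]) ∈ X := by
    intro i w hw
    have h1 : w.length + 1 < N := (hmemws' w).1 hw
    have h2 : (w ++ [i]) ∈ ws := (hmemws _).2 (by simp; omega)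
    exact (hT' _ h2).1
  have hshiftX : ∀ i : S, ∀ s ∈ X, shift i s ∈ X := fun i s hs => hX.2 i ⟨s, hs, rfl⟩
  -- the perturbed shift maps
  set τ : S → X → X := fun i t =>
    ⟨tauAux L T' (fun w => T' (w ++ [i])) (shift i) ws' t.1,
      tauAux_mem (hshiftX i) ws' (hgmem i) t.1 t.2⟩ with hτ
  have hτval : ∀ (i : S) (t : X),
      (τ i t).1 = tauAux L T' (fun w => T' (w ++ [i])) (shift i) ws' t.1 := fun _ _ => rfl
  have hτcont : ∀ i : S, Continuous (τ i) := by
    intro i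
    apply Continuous.subtype_mk
    have hsc : Continuous (shift i : LTree S A → LTree S A) :=
      continuous_pi fun w => continuous_apply (i :: w)
    exact (tauAux_continuous L T' _ hsc ws').comp continuous_subtype_val
  have hτclose : ∀ (i : S) (t : X), treeDist (τ i t).1 (shift i t.1) < δ := by
    intro i t
    have key : AgreeUpTo n ((τ i t).1) (shift i t.1) := by
      rw [hτval]
      apply tauAux_agree ws' ?_ t.1
      intro w hw s hs u hu
      have hwN : w.length + 1 < N := (hmemws' w).1 hw
      have hwws : w ∈ ws := (hmemws w).2 (by omega)
      have hwiws : (w ++ [i]) ∈ ws := (hmemws _).2 (by simp; omega)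
      have h1 : T' (w ++ [i]) u = T (w ++ [i]) u := (hT' _ hwiws).2 u (by omega)
      have h2 : T (w ++ [i]) u = T w (i :: u) := (hTpo w hwN i u hu).symm
      have h3 : T w (i :: u) = T' w (i :: u) :=
        ((hT' w hwws).2 (i :: u) (by simp; omega)).symm
      have h4 : T' w (i :: u) = s (i :: u) :=
        (hs (i :: u) (by simp [hL]; omega)).symm
      calc T' (w ++ [i]) u = s (i :: u) := by rw [h1, h2, h3, h4]
        _ = shift i s u := rfl
    calc treeDist (τ i t).1 (shift i t.1) < (2 : ℝ) ^ (-(n : ℤ)) := treeDist_lt_of_agree key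
      _ ≤ δ := hnδ
  obtain ⟨φ, hφc, hφd, hφconj⟩ := hstabδ τ hτcont hτclose
  have h0ws : ([] : List S) ∈ ws := (hmemws _).2 (by simpa using hN)
  set x₀ : X := ⟨T' [], (hT' _ h0ws).1⟩ with hx₀
  -- the τ-orbit of `x₀` follows `T'`
  have horb : ∀ w : List S, w.length < N →
      (List.foldl (fun x i => τ i x) x₀ w).1 = T' w := by
    intro w
    induction w using List.reverseRecOn with
    | nil => intro _; rfl
    | append_singleton v i ih =>
      intro hvi
      have hv : v.length < N := by simp at hvi; omega
      have hv1 : v.length + 1 < N := by simp at hvi; omega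
      rw [List.foldl_append, List.foldl_cons, List.foldl_nil, hτval]
      have hval : (List.foldl (fun x i => τ i x) x₀ v).1 = T' v := ih hv
      rw [hval]
      apply tauAux_eq ws' ((hmemws' v).2 hv1) (fun u _ => rfl)
      intro w' hw' hagr
      have hw'ws : w' ∈ ws := List.mem_of_mem_filter hw'
      have hvws : v ∈ ws := (hmemws v).2 hv
      have heq : T' v = T' w' := hL₀ v hvws w' hw'ws (hagr.mono (le_max_left _ _))
      exact hinj w' hw'ws v hvws heq.symm
  -- conjugacy along folds
  have hconjfold : ∀ (w : List S) (x : X),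
      List.foldl (fun s i => shift i s) (φ x).1 w
        = (φ (List.foldl (fun y i => τ i y) x w)).1 := by
    intro w
    induction w with
    | nil => intro x; rfl
    | cons i w ih =>
      intro x
      simp only [List.foldl_cons]
      rw [hφconj i x, ih (τ i x)]
  refine ⟨(φ x₀).1, (φ x₀).2, ?_⟩
  intro w hw u hu
  have e1 : (φ x₀).1 (w ++ u) = List.foldl (fun s i => shift i s) (φ x₀).1 w u :=
    (shift_foldl w _ u).symm
  rw [e1, hconjfold w x₀]
  set y : X := List.foldl (fun y i => τ i y) x₀ w with hy
  have hyval : y.1 = T' w := horb w hw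
  have hagree : AgreeUpTo m (φ y).1 y.1 := agree_of_treeDist_lt (hφd y)
  have hwws : w ∈ ws := (hmemws w).2 hw
  calc (φ y).1 u = y.1 u := hagree u hu
    _ = T' w u := by rw [hyval]
    _ = T w u := (hT' w hwws).2 u (by omega)
end

section
/- If a tree-shift X is of finite type, then for every i ∈ Σ the restricted shift map σ^i|_X : X → X is an open map. -/
open Set

/-- Glue: replace the subtree of `t` at `i` by `s`. -/
noncomputable def glueTree {S A : Type*} (i : S) (t s : LTree S A) : LTree S A :=
  fun w => match w with
    | [] => t []
    | j :: u => haveI := Classical.decEq S; if j = i then s u else t (j :: u)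

lemma glueTree_shift {S A : Type*} (i : S) (t s : LTree S A) :
    shift i (glueTree i t s) = s := by
  funext w; simp [shift, glueTree]

lemma glueTree_mem {S A : Type*} (i : S) (t s : LTree S A)
    (F : Set (TreePattern S A)) (n : ℕ)
    (hn : ∀ p ∈ F, ∀ u ∈ p.dom, u.length < n)
    (ht : t ∈ treesOmitting F) (hs : s ∈ treesOmitting F)
    (hagree : ∀ u : List S, u.length + 1 < n → s u = t (i :: u)) :
    glueTree i t s ∈ treesOmitting F := by
  haveI := Classical.decEq S
  intro p hp ⟨w, hw⟩
  match w with
  | [] =>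
    refine ht p hp ⟨[], fun u hu => ?_⟩
    rw [← hw u hu]
    match u with
    | [] => rfl
    | j :: u' =>
      simp only [List.nil_append, glueTree]
      by_cases h : j = i
      · subst h
        rw [if_pos rfl, hagree u' (hn p hp _ hu)]
      · rw [if_neg h]
  | j :: v =>
    by_cases h : j = i
    · subst h
      refine hs p hp ⟨v, fun u hu => ?_⟩
      have := hw u hu
      simpa [glueTree, List.cons_append] using this
    · refine ht p hp ⟨j :: v, fun u hu => ?_⟩
      have := hw u hu
      simpa [glueTree, List.cons_append, h] using this

theorem stmt_17 {S A : Type*} [Fintype S] [Nonempty S] [Fintype A] [Nonempty A] [TopologicalSpace A] [DiscreteTopology A] (X : Set (LTree S A)) (hX : IsTreeShift X) (hft : IsFiniteType X)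
    (i : S) (U : Set X) (hU : IsOpen U) :
    IsOpen {s : X | ∃ t ∈ U, shift i (t : LTree S A) = (s : LTree S A)} := by
  classical
  obtain ⟨F, hFfin, hFX⟩ := hft
  -- a bound `n` on the lengths of words in domains of patterns in `F`
  have hD : (⋃ p ∈ F, p.dom).Finite := hFfin.biUnion fun p _ => p.finite
  have hD2 : ((⋃ p ∈ F, p.dom).image List.length).Finite := hD.image _
  obtain ⟨n0, hn0⟩ := hD2.bddAbove
  set n : ℕ := n0 + 1 with hn_def
  have hn : ∀ p ∈ F, ∀ u ∈ p.dom, u.length < n := by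
    intro p hp u hu
    have : u.length ≤ n0 := hn0 ⟨u, Set.mem_biUnion hp hu, rfl⟩
    omega
  rw [isOpen_iff_forall_mem_open]
  rintro s0 ⟨t0, ht0U, ht0s⟩
  -- extract a cylinder around `t0` inside `U`
  obtain ⟨O, hOopen, hOU⟩ := isOpen_induced_iff.mp hU
  have ht0O : (t0 : LTree S A) ∈ O := by rw [← hOU] at ht0U; exact ht0U
  obtain ⟨I, v, hv, hIO⟩ := isOpen_pi_iff.mp hOopen _ ht0O
  set m : ℕ := n + I.sup List.length + 1 with hm_def
  -- the cylinder around `s0` of depth `m`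
  refine ⟨{s : X | ∀ u : List S, u.length < m → (s : LTree S A) u = (s0 : LTree S A) u},
    ?_, ?_, fun u _ => rfl⟩
  · -- this cylinder maps into the image
    rintro s hs
    set t' : LTree S A := glueTree i (t0 : LTree S A) (s : LTree S A) with ht'
    have hagree : ∀ u : List S, u.length < m →
        (s : LTree S A) u = (t0 : LTree S A) (i :: u) := by
      intro u hu
      rw [hs u hu, ← ht0s]; rfl
    have ht'X : t' ∈ X := by
      rw [hFX]
      refine glueTree_mem i _ _ F n hn ?_ ?_ ?_
      · rw [← hFX]; exact t0.2
      · rw [← hFX]; exact s.2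
      · intro u hu; exact hagree u (by omega)
    have ht'O : t' ∈ O := by
      refine hIO ?_
      intro w hw
      have hwlen : w.length ≤ I.sup List.length := Finset.le_sup hw
      have : t' w = (t0 : LTree S A) w := by
        match w with
        | [] => rfl
        | j :: u =>
          simp only [ht', glueTree]
          by_cases h : j = i
          · subst h
            rw [if_pos rfl]
            exact hagree u (by simp only [List.length_cons] at hwlen; omega)
          · rw [if_neg h]
      rw [this]
      exact (hv w hw).2
    refine ⟨⟨t', ht'X⟩, ?_, ?_⟩
    · rw [← hOU]; exact ht'O
    · exact glueTree_shift i _ _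
  · -- the cylinder is open
    have : {s : X | ∀ u : List S, u.length < m → (s : LTree S A) u = (s0 : LTree S A) u} =
        Subtype.val ⁻¹' (⋂ u ∈ {u : List S | u.length < m},
          {f : LTree S A | f u = (s0 : LTree S A) u}) := by
      ext s; simp [Set.mem_iInter]
    rw [this]
    refine (IsOpen.preimage continuous_subtype_val ?_)
    refine Set.Finite.isOpen_biInter (List.finite_length_lt S m) ?_
    intro u _
    have hc : Continuous (fun f : LTree S A => f u) := continuous_apply u
    show IsOpen ((fun f : LTree S A => f u) ⁻¹' {(s0 : LTree S A) u})
    exact (isOpen_discrete _).preimage hc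
end

section
/- Let Σ = A = {0,1} and let X be the tree-shift of all binary-labeled binary trees t : {0,1}* → {0,1} such that no two distinct words of the same length are both labeled 0 by t. Then X is not a tree-shift of finite type. -/
open Set

theorem stmt_18 :
    ¬ IsFiniteType {t : LTree Bool Bool |
      ∀ u w : List Bool, u ≠ w → u.length = w.length → ¬ (t u = false ∧ t w = false)} := by
  classical
  rintro ⟨F, hFfin, hX⟩
  obtain ⟨M, hM⟩ : ∃ M : ℕ, ∀ p ∈ F, ∀ u ∈ p.dom, u.length ≤ M := by
    have hD : (⋃ p ∈ F, p.dom).Finite := hFfin.biUnion (fun p _ => p.finite)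
    obtain ⟨M, hMub⟩ := (hD.image List.length).bddAbove
    exact ⟨M, fun p hp u hu => hMub ⟨u, Set.mem_biUnion hp hu, rfl⟩⟩
  set a : List Bool := false :: List.replicate M true with ha
  set b : List Bool := true :: List.replicate M true with hb
  have hab : a ≠ b := by simp [ha, hb]
  set t : LTree Bool Bool := fun v => if v = a ∨ v = b then false else true with ht
  have key : ∀ p ∈ F, ∀ w : List Bool, (∀ u ∈ p.dom, t (w ++ u) = p.label u) → False := by
    intro p hp w hw
    have claim : ¬ ((∃ u ∈ p.dom, w ++ u = a) ∧ (∃ u ∈ p.dom, w ++ u = b)) := by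
      rintro ⟨⟨u1, hu1, e1⟩, ⟨u2, hu2, e2⟩⟩
      have l1 : u1.length ≤ M := hM p hp u1 hu1
      have hw1 : 1 ≤ w.length := by
        have := congrArg List.length e1
        simp [ha] at this
        omega
      obtain ⟨x, w', rfl⟩ : ∃ x w', w = x :: w' := by
        cases w with
        | nil => simp at hw1
        | cons x w' => exact ⟨x, w', rfl⟩
      rw [ha, List.cons_append, List.cons_eq_cons] at e1
      rw [hb, List.cons_append, List.cons_eq_cons] at e2
      rw [e1.1] at e2
      exact absurd e2.1 (by simp)
    obtain ⟨c, hcab, hc⟩ : ∃ c, (c = a ∨ c = b) ∧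
        ∀ u ∈ p.dom, (w ++ u = a ∨ w ++ u = b) → w ++ u = c := by
      by_cases h : ∃ u ∈ p.dom, w ++ u = a
      · exact ⟨a, Or.inl rfl, fun u hu h' =>
          h'.elim id (fun hb' => absurd ⟨h, ⟨u, hu, hb'⟩⟩ claim)⟩
      · exact ⟨b, Or.inr rfl, fun u hu h' =>
          h'.elim (fun ha' => absurd ⟨u, hu, ha'⟩ h) id⟩
    set s : LTree Bool Bool := fun v => if v = c then false else true with hs
    have hsX : s ∈ {t : LTree Bool Bool |
        ∀ u w : List Bool, u ≠ w → u.length = w.length → ¬ (t u = false ∧ t w = false)} := by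
      intro u v hne _ hfz
      have hu : u = c := by
        by_contra h; simp [hs, h] at hfz
      have hv : v = c := by
        by_contra h; simp [hs, h] at hfz
      exact hne (hu.trans hv.symm)
    rw [hX] at hsX
    have hst : ∀ u ∈ p.dom, s (w ++ u) = t (w ++ u) := by
      intro u hu
      by_cases h : w ++ u = a ∨ w ++ u = b
      · have hceq := hc u hu h
        simp [hs, ht, h, hceq]; tauto
      · have hne : w ++ u ≠ c := fun e => h (e ▸ hcab)
        simp [hs, ht, h, hne]; tauto
    exact hsX p hp ⟨w, fun u hu => (hst u hu).trans (hw u hu)⟩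
  have htO : t ∈ treesOmitting F := by
    intro p hp hex
    obtain ⟨w, hw⟩ := hex
    exact key p hp w hw
  rw [← hX] at htO
  exact htO a b hab (by simp [ha, hb]) ⟨by simp [ht], by simp [ht]⟩
end

section
/- Let Σ = A = {0,1} and let X be the tree-shift of all trees t : {0,1}* → {0,1} such that no two distinct words of the same length are both labeled 0. Then for each i ∈ {0,1}, the shift map σ^i restricted to X is an open map, even though X is not of finite type. -/
open Set

/-- The example tree-shift. -/
def Xset : Set (LTree Bool Bool) :=
  {t | ∀ u w : List Bool, u ≠ w → u.length = w.length → ¬ (t u = false ∧ t w = false)}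

theorem open_aux (i : Bool) (U : Set ↥Xset) (hU : IsOpen U) :
    IsOpen {s : ↥Xset | ∃ t ∈ U, shift i (t : LTree Bool Bool) = (s : LTree Bool Bool)} := by
  rw [isOpen_iff_forall_mem_open]
  rintro s ⟨t, htU, hts⟩
  obtain ⟨O, hO, hOU⟩ := isOpen_induced_iff.1 hU
  obtain ⟨I, uu, hIu, hsub⟩ := isOpen_pi_iff.1 hO t.1 (by rw [← hOU] at htU; exact htU)
  set N : ℕ := I.sup List.length + 1 with hN
  refine ⟨Subtype.val ⁻¹' (⋂ w ∈ {w : List Bool | w.length < N},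
      {g : LTree Bool Bool | g w = s.1 w}), ?_, ?_, ?_⟩
  · rintro ⟨s', hs'X⟩ hs'V
    simp only [Set.mem_preimage, Set.mem_iInter, Set.mem_setOf_eq] at hs'V
    set t' : LTree Bool Bool := fun w => w.casesOn (t.1 [])
      (fun j v => if j = i then s' v else if v.length < N then t.1 (j :: v) else true) with ht'
    have ht'cons : ∀ j v, t' (j :: v) =
        if j = i then s' v else if v.length < N then t.1 (j :: v) else true := fun _ _ => rfl
    have hkey : ∀ v : List Bool, v.length < N → s' v = t.1 (i :: v) := by
      intro v hv
      rw [hs'V v hv, ← hts]; rfl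
    have ht'X : t' ∈ Xset := by
      intro a b hne hlen hab
      obtain ⟨ha, hb⟩ := hab
      match a, b with
      | [], [] => exact hne rfl
      | [], _ :: _ => simp at hlen
      | _ :: _, [] => simp at hlen
      | x :: a', y :: b' =>
        simp only [List.length_cons, Nat.add_right_cancel_iff] at hlen
        rw [ht'cons] at ha hb
        by_cases hx : x = i <;> by_cases hy : y = i
        · rw [if_pos hx] at ha
          rw [if_pos hy] at hb
          exact hs'X a' b' (fun h => hne (by rw [h, hx.trans hy.symm])) hlen ⟨ha, hb⟩
        · rw [if_pos hx] at ha
          rw [if_neg hy] at hb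
          by_cases hlb : b'.length < N
          · rw [if_pos hlb] at hb
            have hla : a'.length < N := hlen ▸ hlb
            have hfa : t.1 (i :: a') = false := (hkey a' hla).symm.trans ha
            exact t.2 (i :: a') (y :: b')
              (fun h => hy ((List.cons_eq_cons.mp h).1).symm) (by simp [hlen]) ⟨hfa, hb⟩
          · rw [if_neg hlb] at hb; exact absurd hb (by simp)
        · rw [if_pos hy] at hb
          rw [if_neg hx] at ha
          by_cases hla : a'.length < N
          · rw [if_pos hla] at ha
            have hlb : b'.length < N := hlen ▸ hla
            have hfb : t.1 (i :: b') = false := (hkey b' hlb).symm.trans hb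
            exact t.2 (x :: a') (i :: b')
              (fun h => hx ((List.cons_eq_cons.mp h).1)) (by simp [hlen]) ⟨ha, hfb⟩
          · rw [if_neg hla] at ha; exact absurd ha (by simp)
        · rw [if_neg hx] at ha; rw [if_neg hy] at hb
          by_cases hla : a'.length < N
          · have hlb : b'.length < N := hlen ▸ hla
            rw [if_pos hla] at ha; rw [if_pos hlb] at hb
            exact t.2 _ _ hne (by simp [hlen]) ⟨ha, hb⟩
          · rw [if_neg hla] at ha; exact absurd ha (by simp)
    refine ⟨⟨t', ht'X⟩, ?_, ?_⟩
    · rw [← hOU]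
      apply hsub
      intro w hwI
      have hwI' : w ∈ I := hwI
      have hlw : w.length < N := Nat.lt_succ_of_le (Finset.le_sup hwI')
      have hww : t' w = t.1 w := by
        match w with
        | [] => rfl
        | j :: v =>
          rw [ht'cons]
          have hlv : v.length < N := Nat.lt_of_succ_lt hlw
          by_cases hj : j = i
          · subst hj; rw [if_pos rfl, hkey v hlv]
          · rw [if_neg hj, if_pos hlv]
      show t' w ∈ uu w
      rw [hww]; exact (hIu w hwI').2
    · show shift i t' = s'
      funext v
      exact (ht'cons i v).trans (if_pos rfl)
  · apply IsOpen.preimage continuous_subtype_val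
    apply Set.Finite.isOpen_biInter (List.finite_length_lt Bool N)
    intro w _
    show IsOpen ((fun g : LTree Bool Bool => g w) ⁻¹' {s.1 w})
    exact IsOpen.preimage (continuous_apply w) (isOpen_discrete _)
  · simp only [Set.mem_preimage, Set.mem_iInter, Set.mem_setOf_eq]
    intros; trivial

theorem notFT_aux : ¬ IsFiniteType Xset := by
  rintro ⟨F, hF, hXF⟩
  obtain ⟨D, hD⟩ : ∃ D : ℕ, ∀ p ∈ F, ∀ u ∈ p.dom, u.length ≤ D := by
    have hfin : (⋃ p ∈ F, p.dom).Finite := hF.biUnion (fun p _ => p.finite)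
    obtain ⟨D, hD⟩ := (hfin.image List.length).bddAbove
    exact ⟨D, fun p hp u hu => hD (Set.mem_image_of_mem _ (Set.mem_biUnion hp hu))⟩
  set n : ℕ := D + 1 with hn
  set L0 : List Bool := List.replicate n false with hL0
  set L1 : List Bool := List.replicate n true with hL1
  have hL01 : L0 ≠ L1 := by
    rw [hL0, hL1, hn]
    simp [List.replicate_succ]
  set t : LTree Bool Bool := fun w => if w = L0 ∨ w = L1 then false else true with htdef
  have htX : t ∉ Xset := by
    intro h
    exact h L0 L1 hL01 (by simp [hL0, hL1]) ⟨by simp [htdef], by simp [htdef]⟩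
  rw [hXF] at htX
  have htX' : ¬ ∀ p ∈ F, Omits t p := htX
  push_neg at htX'
  obtain ⟨p, hpF, hp⟩ := htX'
  unfold Omits at hp
  rw [not_not] at hp
  obtain ⟨v, hv⟩ := hp
  have hboth : ∀ u0 ∈ p.dom, ∀ u1 ∈ p.dom, v ++ u0 = L0 → v ++ u1 = L1 → False := by
    intro u0 hu0 u1 hu1 h0 h1
    have hl0 : u0.length ≤ D := hD p hpF u0 hu0
    have hv1 : 1 ≤ v.length := by
      have hlen := congrArg List.length h0
      simp only [List.length_append, hL0, List.length_replicate, hn] at hlen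
      omega
    obtain ⟨a, v', rfl⟩ : ∃ a v', v = a :: v' := by
      cases v with
      | nil => simp at hv1
      | cons a v' => exact ⟨a, v', rfl⟩
    have h0' : a = false := by
      have h0c : a :: (v' ++ u0) = false :: List.replicate D false := by
        simpa [hL0, hn, List.replicate_succ] using h0
      exact (List.cons_eq_cons.mp h0c).1
    have h1' : a = true := by
      have h1c : a :: (v' ++ u1) = true :: List.replicate D true := by
        simpa [hL1, hn, List.replicate_succ] using h1
      exact (List.cons_eq_cons.mp h1c).1
    simp [h0'] at h1'
  have key : ∀ c : Bool, (∀ u ∈ p.dom, v ++ u ≠ List.replicate n c) → False := by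
    intro c hc
    set t1 : LTree Bool Bool := fun w => if w = List.replicate n (!c) then false else true with ht1
    have ht1X : t1 ∈ Xset := by
      intro a b hne hlen hab
      obtain ⟨ha, hb⟩ := hab
      have ha' : a = List.replicate n (!c) := by by_contra h; simp [ht1, h] at ha
      have hb' : b = List.replicate n (!c) := by by_contra h; simp [ht1, h] at hb
      exact hne (ha'.trans hb'.symm)
    rw [hXF] at ht1X
    apply ht1X p hpF
    refine ⟨v, fun u hu => ?_⟩
    rw [← hv u hu]
    have hne := hc u hu
    show (if v ++ u = List.replicate n (!c) then false else true) =
      (if v ++ u = L0 ∨ v ++ u = L1 then false else true)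
    by_cases h : v ++ u = List.replicate n (!c)
    · rw [if_pos h, if_pos]
      cases c
      · right; rw [h, hL1]; rfl
      · left; rw [h, hL0]; rfl
    · rw [if_neg h, if_neg]
      rintro (h0 | h1)
      · cases c
        · exact hne h0
        · exact h (by rw [h0, hL0]; rfl)
      · cases c
        · exact h (by rw [h1, hL1]; rfl)
        · exact hne h1
  by_cases hc : ∀ u ∈ p.dom, v ++ u ≠ L1
  · exact key true hc
  · push_neg at hc
    obtain ⟨u1, hu1, h1⟩ := hc
    apply key false
    intro u0 hu0 h0
    exact hboth u0 hu0 u1 hu1 h0 h1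


theorem stmt_19 :
    (∀ i : Bool, ∀ U : Set ↥{t : LTree Bool Bool |
        ∀ u w : List Bool, u ≠ w → u.length = w.length → ¬ (t u = false ∧ t w = false)},
      IsOpen U →
      IsOpen {s : ↥{t : LTree Bool Bool |
          ∀ u w : List Bool, u ≠ w → u.length = w.length → ¬ (t u = false ∧ t w = false)} |
        ∃ t ∈ U, shift i (t : LTree Bool Bool) = (s : LTree Bool Bool)}) ∧
    ¬ IsFiniteType {t : LTree Bool Bool |
      ∀ u w : List Bool, u ≠ w → u.length = w.length → ¬ (t u = false ∧ t w = false)} := by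
  exact ⟨open_aux, notFT_aux⟩
end
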